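/- arXiv:2312.13159 — 3 statements merged into one kernel-verified Lean document; each statement's English description precedes it below -/
import Mathlib

section
/- For binary trees T and T' of size n, the pair (T, T') is a Tamari interval (i.e., T ≤ T' in the Tamari lattice) if and only if the bracket-vector of T is componentwise at most the bracket-vector of T', where the i-th entry of the bracket-vector of a tree is the size of the right subtree of its i-th node in infix order. -/
/-- Binary trees: a leaf or a binary node with two subtrees. -/
inductive BT : Type
  | leaf : BT
  | node : BT → BT → BT

namespace BT

/-- Number of binary (internal) nodes. -/
def size : BT → ℕ
  | leaf => 0
  | node l r => l.size + r.size + 1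

/-- One right rotation somewhere in the tree: ((A,B),C) ↦ (A,(B,C)). -/
inductive Rot : BT → BT → Prop
  | rotate (A B C : BT) : Rot (node (node A B) C) (node A (node B C))
  | left {l l' : BT} (r : BT) : Rot l l' → Rot (node l r) (node l' r)
  | right (l : BT) {r r' : BT} : Rot r r' → Rot (node l r) (node l r')

/-- Tamari order: reflexive-transitive closure of right rotation. -/
def tle (T T' : BT) : Prop := Relation.ReflTransGen Rot T T'

/-- Bracket-vector: sizes of right subtrees of nodes, in infix order. -/
def bracket : BT → List ℕ
  | leaf => []
  | node l r => bracket l ++ r.size :: bracket r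

/-- Dual bracket-vector: sizes of left subtrees of nodes, in infix order. -/
def dualBracket : BT → List ℕ
  | leaf => []
  | node l r => dualBracket l ++ l.size :: dualBracket r

/-- Canopy word: for each leaf (left to right), 1 if it is a left child, 0 if a right child;
the argument `b` is the value assigned to the tree if it is itself a leaf. -/
def canopyAux (b : ℕ) : BT → List ℕ
  | leaf => [b]
  | node l r => canopyAux 1 l ++ canopyAux 0 r

/-- Canopy-vector of a binary tree. -/
def canopy (T : BT) : List ℕ := canopyAux 1 T

/-- Left-right mirror. -/
def mir : BT → BT
  | leaf => leaf
  | node l r => node (mir r) (mir l)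

/-- Tamari interval of size n. -/
def interval (p : BT × BT) (n : ℕ) : Prop :=
  p.1.size = n ∧ p.2.size = n ∧ tle p.1 p.2

/-- Tamari interval (of unspecified size). -/
def isInt (p : BT × BT) : Prop := p.1.size = p.2.size ∧ tle p.1 p.2

/-- The rise operation (T,T') ↦ ((T,ε),(ε,T')). -/
def riseF (p : BT × BT) : BT × BT := (node p.1 leaf, node leaf p.2)

/-- An interval is modern when its rise is again an interval. -/
def modern (p : BT × BT) : Prop := tle (node p.1 leaf) (node leaf p.2)

/-- Infinitely modern: every iterated rise is an interval. -/
def infModern (p : BT × BT) : Prop :=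
  ∀ k : ℕ, tle ((riseF^[k] p).1) ((riseF^[k] p).2)

/-- Synchronized: equal canopies. -/
def synced (p : BT × BT) : Prop := canopy p.1 = canopy p.2

/-- Self-dual: equal to its dual (mir T', mir T). -/
def selfDual (p : BT × BT) : Prop := mir p.2 = p.1 ∧ mir p.1 = p.2

/-- Number of positions where the two canopies agree. -/
def agreeCount (p : BT × BT) : ℕ :=
  ((List.range (p.1.size + 1)).filter
    (fun i => (canopy p.1).getD i 0 == (canopy p.2).getD i 0)).length

/-- Number of canopy positions of joint type (a on top, b on bottom), for an interval (T,T')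
with T' the upper tree. -/
def typeCount (a b : ℕ) (p : BT × BT) : ℕ :=
  ((List.range (p.1.size + 1)).filter
    (fun i => ((canopy p.2).getD i 0 == a) && ((canopy p.1).getD i 0 == b))).length

end BT

namespace BT

lemma bracket_length (T : BT) : (bracket T).length = T.size := by
  induction T with
  | leaf => rfl
  | node l r ihl ihr => simp [bracket, size, ihl, ihr]; omega

lemma size_rot {T T' : BT} (h : Rot T T') : T.size = T'.size := by
  induction h with
  | rotate A B C => simp [size]; omega
  | left r _ ih => simp [size, ih]
  | right l _ ih => simp [size, ih]

lemma getD_mid (u t : List ℕ) (x : ℕ) : (u ++ x :: t).getD u.length 0 = x := by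
  rw [List.getD_append_right _ _ _ _ le_rfl]; simp

lemma getD_left (u t : List ℕ) (q : ℕ) (h : q < u.length) :
    (u ++ t).getD q 0 = u.getD q 0 :=
  List.getD_append _ _ _ _ h

lemma getD_right (u t : List ℕ) (x : ℕ) (q : ℕ) :
    (u ++ x :: t).getD (u.length + 1 + q) 0 = t.getD q 0 := by
  rw [List.getD_append_right _ _ _ _ (by omega)]
  have h : u.length + 1 + q - u.length = q + 1 := by omega
  rw [h, List.getD_cons_succ]

lemma getD_node_left (l r : BT) (q : ℕ) (h : q < l.size) :
    (bracket (node l r)).getD q 0 = (bracket l).getD q 0 := by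
  rw [bracket]
  exact getD_left _ _ _ (by rw [bracket_length]; exact h)

lemma getD_node_root (l r : BT) :
    (bracket (node l r)).getD l.size 0 = r.size := by
  rw [bracket, ← bracket_length l, getD_mid]

lemma getD_node_right (l r : BT) (q : ℕ) :
    (bracket (node l r)).getD (l.size + 1 + q) 0 = (bracket r).getD q 0 := by
  rw [bracket, ← bracket_length l, getD_right]

lemma pw_mid (u t : List ℕ) (x y : ℕ) (hxy : x ≤ y) (q : ℕ) :
    (u ++ x :: t).getD q 0 ≤ (u ++ y :: t).getD q 0 := by
  rcases lt_trichotomy q u.length with h | h | h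
  · rw [getD_left _ _ _ h, getD_left _ _ _ h]
  · subst h; rw [getD_mid, getD_mid]; exact hxy
  · obtain ⟨k, rfl⟩ : ∃ k, q = u.length + 1 + k := ⟨q - u.length - 1, by omega⟩
    rw [getD_right, getD_right]

lemma eq_except_mid (u t : List ℕ) (x y q : ℕ) (h : q ≠ u.length) :
    (u ++ x :: t).getD q 0 = (u ++ y :: t).getD q 0 := by
  rcases lt_or_gt_of_ne h with h | h
  · rw [getD_left _ _ _ h, getD_left _ _ _ h]
  · obtain ⟨k, rfl⟩ : ∃ k, q = u.length + 1 + k := ⟨q - u.length - 1, by omega⟩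
    rw [getD_right, getD_right]

lemma pw_left (u u' t : List ℕ) (hlen : u.length = u'.length)
    (h : ∀ q, u.getD q 0 ≤ u'.getD q 0) (q : ℕ) :
    (u ++ t).getD q 0 ≤ (u' ++ t).getD q 0 := by
  rcases lt_or_ge q u.length with hq | hq
  · rw [getD_left _ _ _ hq, getD_left _ _ _ (hlen ▸ hq)]; exact h q
  · rw [List.getD_append_right _ _ _ _ hq, List.getD_append_right _ _ _ _ (hlen ▸ hq), hlen]

lemma pw_right (u t t' : List ℕ) (h : ∀ q, t.getD q 0 ≤ t'.getD q 0) (q : ℕ) :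
    (u ++ t).getD q 0 ≤ (u ++ t').getD q 0 := by
  rcases lt_or_ge q u.length with hq | hq
  · rw [getD_left _ _ _ hq, getD_left _ _ _ hq]
  · rw [List.getD_append_right _ _ _ _ hq, List.getD_append_right _ _ _ _ hq]; exact h _

lemma pw_rot {T T' : BT} (h : Rot T T') (q : ℕ) :
    (bracket T).getD q 0 ≤ (bracket T').getD q 0 := by
  induction h generalizing q with
  | rotate A B C =>
      have e1 : bracket (node (node A B) C)
          = bracket A ++ B.size :: (bracket B ++ C.size :: bracket C) := by
        simp [bracket]
      have e2 : bracket (node A (node B C))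
          = bracket A ++ (B.size + C.size + 1) :: (bracket B ++ C.size :: bracket C) := by
        simp [bracket, size]
      rw [e1, e2]
      exact pw_mid _ _ _ _ (by omega) q
  | left r h ih =>
      rw [bracket, bracket]
      exact pw_left _ _ _ (by rw [bracket_length, bracket_length, size_rot h]) ih q
  | right l h ih =>
      rw [bracket, bracket]
      refine pw_right _ _ _ (fun q => ?_) q
      cases q with
      | zero => simpa [size_rot h] using le_refl _
      | succ k => simpa using ih k

lemma pw_of_tle {T T' : BT} (h : tle T T') (q : ℕ) :
    (bracket T).getD q 0 ≤ (bracket T').getD q 0 := by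
  induction h with
  | refl => exact le_rfl
  | tail h1 hstep ih => exact le_trans ih (pw_rot hstep q)

lemma sum_rot {T T' : BT} (h : Rot T T') : (bracket T).sum < (bracket T').sum := by
  induction h with
  | rotate A B C => simp [bracket, size]
  | left r h ih => simp [bracket]; omega
  | right l h ih => simp [bracket, size_rot h]; omega

lemma sum_le_of_pw : ∀ (u v : List ℕ), u.length = v.length →
    (∀ q, u.getD q 0 ≤ v.getD q 0) → u.sum ≤ v.sum := by
  intro u
  induction u with
  | nil => intro v _ _; exact Nat.zero_le _
  | cons x u ih =>
    intro v hlen h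
    cases v with
    | nil => simp at hlen
    | cons y v =>
      simp only [List.sum_cons]
      have h0 := h 0
      simp only [List.getD_cons_zero] at h0
      have h1 := ih v (by simpa using hlen) (fun q => by simpa using h (q + 1))
      omega

lemma bracket_bound : ∀ (T : BT), ∀ i < T.size, i + (bracket T).getD i 0 + 1 ≤ T.size := by
  intro T
  induction T with
  | leaf => intro i h; simp [size] at h
  | node l r ihl ihr =>
    intro i hi
    rcases lt_trichotomy i l.size with h | h | h
    · rw [getD_node_left l r i h]
      have := ihl i h
      simp only [size]; omega
    · subst h; rw [getD_node_root]; simp [size]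
    · obtain ⟨k, rfl⟩ : ∃ k, i = l.size + 1 + k := ⟨i - l.size - 1, by omega⟩
      rw [getD_node_right]
      have hk : k < r.size := by simp [size] at hi; omega
      have := ihr k hk
      simp only [size]; omega

lemma bracket_nest : ∀ (T : BT), ∀ q j, q < j → j < T.size →
    j ≤ q + (bracket T).getD q 0 →
    j + (bracket T).getD j 0 ≤ q + (bracket T).getD q 0 := by
  intro T
  induction T with
  | leaf => intro q j _ hj; simp [size] at hj
  | node l r ihl ihr =>
    intro q j hqj hj hreach
    rcases lt_trichotomy q l.size with h | h | h
    · have hb := bracket_bound l q h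
      rw [getD_node_left l r q h] at hreach ⊢
      have hjl : j < l.size := by omega
      rw [getD_node_left l r j hjl]
      exact ihl q j hqj hjl hreach
    · subst h
      rw [getD_node_root] at hreach ⊢
      obtain ⟨k, rfl⟩ : ∃ k, j = l.size + 1 + k := ⟨j - l.size - 1, by omega⟩
      rw [getD_node_right]
      have hk : k < r.size := by simp [size] at hj; omega
      have := bracket_bound r k hk
      omega
    · obtain ⟨kq, rfl⟩ : ∃ k, q = l.size + 1 + k := ⟨q - l.size - 1, by omega⟩
      obtain ⟨kj, rfl⟩ : ∃ k, j = l.size + 1 + k := ⟨j - l.size - 1, by omega⟩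
      rw [getD_node_right] at hreach ⊢
      rw [getD_node_right]
      have hkj : kj < r.size := by simp [size] at hj; omega
      have := ihr kq kj (by omega) hkj (by omega)
      omega

lemma bracket_inj : ∀ (T T' : BT), bracket T = bracket T' → T = T' := by
  intro T
  induction T with
  | leaf =>
    intro T' h
    cases T' with
    | leaf => rfl
    | node l r =>
      exfalso
      have := congrArg List.length h
      simp [bracket, bracket_length] at this
  | node l r ihl ihr =>
    intro T' h
    cases T' with
    | leaf =>
      exfalso
      have := congrArg List.length h
      simp [bracket, bracket_length] at this
    | node l' r' =>
      have hlen : l.size + r.size = l'.size + r'.size := by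
        have := congrArg List.length h
        simp [bracket, bracket_length] at this; omega
      have hsz : l.size = l'.size := by
        by_contra hne
        rcases lt_or_gt_of_ne hne with hlt | hlt
        · have e1 : (bracket (node l r)).getD l.size 0 = r.size := getD_node_root l r
          have e2 : (bracket (node l' r')).getD l.size 0 = (bracket l').getD l.size 0 :=
            getD_node_left l' r' l.size hlt
          have hb := bracket_bound l' l.size hlt
          rw [h, e2] at e1
          omega
        · have e1 : (bracket (node l' r')).getD l'.size 0 = r'.size := getD_node_root l' r'
          have e2 : (bracket (node l r)).getD l'.size 0 = (bracket l).getD l'.size 0 :=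
            getD_node_left l r l'.size hlt
          have hb := bracket_bound l l'.size hlt
          rw [← h, e2] at e1
          omega
      have hbl : (bracket l).length = (bracket l').length := by
        rw [bracket_length, bracket_length, hsz]
      obtain ⟨h1, h2⟩ := List.append_inj h hbl
      injection h2 with h2a h2b
      rw [ihl l' h1, ihr r' h2b]

lemma step : ∀ (T : BT) (v : ℕ → ℕ) (i : ℕ),
    (∀ q j, q < j → j < T.size → j ≤ q + v q → j + v j ≤ q + v q) →
    (∀ q < T.size, (bracket T).getD q 0 ≤ v q) →
    i < T.size →
    (bracket T).getD i 0 < v i →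
    (∀ q < T.size, (bracket T).getD q 0 < v q →
      q + (bracket T).getD q 0 ≤ i + (bracket T).getD i 0) →
    (∀ q < T.size, (bracket T).getD q 0 < v q →
      q + (bracket T).getD q 0 = i + (bracket T).getD i 0 → i ≤ q) →
    (∃ T₁, Rot T T₁ ∧ ∀ q < T.size, (bracket T₁).getD q 0 ≤ v q) ∨
      i + (bracket T).getD i 0 + 1 = T.size := by
  intro T
  induction T with
  | leaf => intro v i _ _ hi; simp [size] at hi
  | node l r ihl ihr =>
    intro v i hnest hpw hi hlt hmax hmin
    have hsz : (node l r).size = l.size + r.size + 1 := rfl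
    rcases lt_trichotomy i l.size with hil | hil | hil
    · -- i lies in l
      have hli : (bracket (node l r)).getD i 0 = (bracket l).getD i 0 :=
        getD_node_left l r i hil
      have res := ihl v i
        (fun q j hqj hj hr => hnest q j hqj (by omega) hr)
        (fun q hq => by
          rw [← getD_node_left l r q hq]; exact hpw q (by omega))
        hil
        (by rw [← hli]; exact hlt)
        (fun q hq hql => by
          have := hmax q (by omega) (by rwa [getD_node_left l r q hq])
          rwa [getD_node_left l r q hq, hli] at this)
        (fun q hq hql hqe => by
          refine hmin q (by omega) (by rwa [getD_node_left l r q hq]) ?_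
          rwa [getD_node_left l r q hq, hli])
      rcases res with ⟨l₁, hrot, hq⟩ | hend
      · refine Or.inl ⟨node l₁ r, Rot.left r hrot, fun q hq' => ?_⟩
        have hsz1 : l₁.size = l.size := (size_rot hrot).symm
        rcases lt_trichotomy q l.size with h | h | h
        · rw [getD_node_left l₁ r q (by omega)]
          exact hq q h
        · subst h
          have e : (bracket (node l₁ r)).getD l.size 0 = r.size := by
            rw [show l.size = l₁.size from hsz1.symm]; exact getD_node_root l₁ r
          rw [e]
          have := hpw l.size (by omega)
          rwa [getD_node_root] at this
        · obtain ⟨k, rfl⟩ : ∃ k, q = l.size + 1 + k := ⟨q - l.size - 1, by omega⟩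
          have e : (bracket (node l₁ r)).getD (l.size + 1 + k) 0 = (bracket r).getD k 0 := by
            rw [show l.size = l₁.size from hsz1.symm]; exact getD_node_right l₁ r k
          rw [e]
          have := hpw (l.size + 1 + k) (by omega)
          rwa [getD_node_right] at this
      · -- i reaches the right end of l: rotate at the root of l
        cases l with
        | leaf => simp [size] at hil
        | node A B =>
          have hszl : (node A B).size = A.size + B.size + 1 := rfl
          have hiA : i = A.size := by
            rcases lt_trichotomy i A.size with h | h | h
            · exfalso
              have hb := bracket_bound A i h
              rw [getD_node_left A B i h] at hend
              omega
            · exact h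
            · exfalso
              have haj : (bracket (node (node A B) r)).getD A.size 0 = B.size := by
                rw [getD_node_left (node A B) r A.size (by omega), getD_node_root]
              by_cases hjS : (bracket (node (node A B) r)).getD A.size 0 < v A.size
              · have := hmin A.size (by omega) hjS (by rw [haj, hli]; omega)
                omega
              · have h1 := hpw A.size (by omega)
                rw [haj] at h1 hjS
                have hvj : v A.size = B.size := by omega
                have h2 := hnest A.size i h (by omega) (by rw [hvj]; omega)
                rw [hvj] at h2
                rw [hli] at hlt
                omega
          subst hiA
          have haLB : (bracket (node (node A B) r)).getD A.size 0 = B.size := by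
            rw [hli, getD_node_root]
          have hgp : (bracket (node (node A B) r)).getD (node A B).size 0 = r.size :=
            getD_node_root (node A B) r
          have hvp : v (node A B).size = r.size := by
            by_cases hpS : (bracket (node (node A B) r)).getD (node A B).size 0
                < v (node A B).size
            · exfalso
              have := hmax (node A B).size (by omega) hpS
              rw [hgp, haLB] at this
              omega
            · have h1 := hpw (node A B).size (by omega)
              rw [hgp] at h1 hpS
              omega
          have hlt' : B.size < v A.size := by rw [haLB] at hlt; exact hlt
          have hkey : B.size + r.size + 1 ≤ v A.size := by
            have h2 := hnest A.size (node A B).size (by omega) (by omega) (by omega)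
            rw [hvp] at h2
            omega
          refine Or.inl ⟨node A (node B r), Rot.rotate A B r, fun q hq' => ?_⟩
          have e1 : bracket (node (node A B) r)
              = bracket A ++ B.size :: (bracket B ++ r.size :: bracket r) := by
            simp [bracket]
          have e2 : bracket (node A (node B r))
              = bracket A ++ (B.size + r.size + 1) :: (bracket B ++ r.size :: bracket r) := by
            simp [bracket, size]
          by_cases hqi : q = A.size
          · subst hqi
            rw [e2, ← bracket_length A, getD_mid, bracket_length]
            exact hkey
          · rw [e2, eq_except_mid (bracket A) _ (B.size + r.size + 1) B.size q
              (by rw [bracket_length]; exact hqi), ← e1]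
            exact hpw q hq'
    · -- i is the root: right disjunct
      subst hil
      right
      rw [getD_node_root]
      omega
    · -- i lies in r
      obtain ⟨k, rfl⟩ : ∃ k, i = l.size + 1 + k := ⟨i - l.size - 1, by omega⟩
      have hkr : k < r.size := by omega
      have hri : (bracket (node l r)).getD (l.size + 1 + k) 0 = (bracket r).getD k 0 :=
        getD_node_right l r k
      have res := ihr (fun q => v (l.size + 1 + q)) k
        (fun q j hqj hj hr => by
          show j + v (l.size + 1 + j) ≤ q + v (l.size + 1 + q)
          have hr' : j ≤ q + v (l.size + 1 + q) := hr
          have := hnest (l.size + 1 + q) (l.size + 1 + j) (by omega) (by omega) (by omega)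
          omega)
        (fun q hq => by
          show (bracket r).getD q 0 ≤ v (l.size + 1 + q)
          have := hpw (l.size + 1 + q) (by omega)
          rwa [getD_node_right] at this)
        hkr
        (by show (bracket r).getD k 0 < v (l.size + 1 + k)
            rw [← getD_node_right l r k]; exact hlt)
        (fun q hq hql => by
          have hql' : (bracket r).getD q 0 < v (l.size + 1 + q) := hql
          have := hmax (l.size + 1 + q) (by omega)
            (by rw [getD_node_right]; exact hql')
          rw [getD_node_right, getD_node_right] at this
          omega)
        (fun q hq hql hqe => by
          have hql' : (bracket r).getD q 0 < v (l.size + 1 + q) := hql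
          have := hmin (l.size + 1 + q) (by omega)
            (by rw [getD_node_right]; exact hql')
            (by rw [getD_node_right, getD_node_right]; omega)
          omega)
      rcases res with ⟨r₁, hrot, hq⟩ | hend
      · refine Or.inl ⟨node l r₁, Rot.right l hrot, fun q hq' => ?_⟩
        have hsz1 : r₁.size = r.size := (size_rot hrot).symm
        rcases lt_trichotomy q l.size with h | h | h
        · rw [getD_node_left l r₁ q h]
          have := hpw q (by omega)
          rwa [getD_node_left l r q h] at this
        · subst h
          rw [getD_node_root, hsz1]
          have := hpw l.size (by omega)
          rwa [getD_node_root] at this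
        · obtain ⟨k', rfl⟩ : ∃ k', q = l.size + 1 + k' := ⟨q - l.size - 1, by omega⟩
          rw [getD_node_right]
          exact hq k' (by omega)
      · right
        rw [hri]
        omega

lemma tle_aux : ∀ (k : ℕ) (T T' : BT), T.size = T'.size →
    (∀ q < T.size, (bracket T).getD q 0 ≤ (bracket T').getD q 0) →
    (bracket T').sum < k + (bracket T).sum → tle T T' := by
  intro k
  induction k with
  | zero =>
    intro T T' hs hpw hsum
    exfalso
    have hfull : ∀ q, (bracket T).getD q 0 ≤ (bracket T').getD q 0 := by
      intro q
      rcases lt_or_ge q T.size with h | h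
      · exact hpw q h
      · rw [List.getD_eq_default _ _ (by rw [bracket_length]; exact h)]
        exact Nat.zero_le _
    have := sum_le_of_pw (bracket T) (bracket T')
      (by rw [bracket_length, bracket_length, hs]) hfull
    omega
  | succ k ih =>
    intro T T' hs hpw hsum
    by_cases heq : bracket T = bracket T'
    · rw [bracket_inj T T' heq]
      exact Relation.ReflTransGen.refl
    · -- there is a strict index
      have hlen : (bracket T).length = (bracket T').length := by
        rw [bracket_length, bracket_length, hs]
      have hex : ∃ q, q < T.size ∧ (bracket T).getD q 0 < (bracket T').getD q 0 := by
        by_contra hno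
        push_neg at hno
        apply heq
        apply List.ext_getElem hlen
        intro q h1 h2
        rw [← List.getD_eq_getElem _ 0 h1, ← List.getD_eq_getElem _ 0 h2]
        have hq : q < T.size := by rwa [bracket_length] at h1
        exact le_antisymm (hpw q hq) (hno q hq)
      set S : Finset ℕ := (Finset.range T.size).filter
        (fun q => (bracket T).getD q 0 < (bracket T').getD q 0) with hS
      have hSne : S.Nonempty := by
        obtain ⟨q, hq1, hq2⟩ := hex
        exact ⟨q, by rw [hS, Finset.mem_filter, Finset.mem_range]; exact ⟨hq1, hq2⟩⟩
      obtain ⟨m, hmS, hmmax⟩ := Finset.exists_max_image S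
        (fun q => q + (bracket T).getD q 0) hSne
      set S' : Finset ℕ := S.filter
        (fun q => q + (bracket T).getD q 0 = m + (bracket T).getD m 0) with hS'
      have hS'ne : S'.Nonempty := ⟨m, by rw [hS', Finset.mem_filter]; exact ⟨hmS, rfl⟩⟩
      set i := S'.min' hS'ne with hidef
      have hiS' : i ∈ S' := Finset.min'_mem _ _
      have hiS : i ∈ S := (Finset.mem_filter.1 hiS').1
      have hieq : i + (bracket T).getD i 0 = m + (bracket T).getD m 0 :=
        (Finset.mem_filter.1 hiS').2
      have hin : i < T.size := Finset.mem_range.1 (Finset.mem_filter.1 hiS).1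
      have hilt : (bracket T).getD i 0 < (bracket T').getD i 0 :=
        (Finset.mem_filter.1 hiS).2
      have res := step T (fun q => (bracket T').getD q 0) i
        (fun q j hqj hj hr => bracket_nest T' q j hqj (by omega) hr)
        (fun q hq => hpw q hq)
        hin hilt
        (fun q hq hql => by
          have hql' : (bracket T).getD q 0 < (bracket T').getD q 0 := hql
          have hqS : q ∈ S := by
            rw [hS, Finset.mem_filter, Finset.mem_range]; exact ⟨hq, hql'⟩
          have := hmmax q hqS
          omega)
        (fun q hq hql hqe => by
          have hql' : (bracket T).getD q 0 < (bracket T').getD q 0 := hql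
          have hqS : q ∈ S := by
            rw [hS, Finset.mem_filter, Finset.mem_range]; exact ⟨hq, hql'⟩
          have hqS' : q ∈ S' := by
            rw [hS', Finset.mem_filter]
            exact ⟨hqS, by omega⟩
          exact Finset.min'_le _ _ hqS')
      rcases res with ⟨T₁, hrot, hq⟩ | hend
      · have hs1 : T₁.size = T'.size := by rw [← size_rot hrot]; exact hs
        have hsum1 : (bracket T₁).sum > (bracket T).sum := sum_rot hrot
        have htle : tle T₁ T' := ih T₁ T' hs1
          (fun q hqlt => hq q (by rw [size_rot hrot]; exact hqlt))
          (by omega)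
        exact Relation.ReflTransGen.head hrot htle
      · exfalso
        have hb := bracket_bound T' i (by omega)
        omega

end BT

theorem bracket_vector_characterization (n : ℕ) (T T' : BT)
    (hT : T.size = n) (hT' : T'.size = n) :
    BT.tle T T' ↔ ∀ i < n, (BT.bracket T).getD i 0 ≤ (BT.bracket T').getD i 0 := by
  constructor
  · intro h i _
    exact BT.pw_of_tle h i
  · intro h
    refine BT.tle_aux ((BT.bracket T').sum + 1) T T' (by omega) ?_ (by omega)
    intro q hq
    exact h q (by omega)
end

section
/- The map sending a binary tree T of size n to its degree-vector d(T) = (d_0, ..., d_n), where d_i is the number of nodes on the maximal left branch of T ending at the i-th leaf (counted from the left, starting at 0), is a bijection from binary trees of size n to vectors (d_0,...,d_n) of nonnegative integers satisfying d_0 + ... + d_n = n and d_0 + ... + d_i > i for all 0 ≤ i ≤ n-1. -/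
/-- Degree-vector of a binary tree: for each leaf (left to right), the number of nodes on the
maximal left branch ending at that leaf. -/
def BT.degVec : BT → List ℕ
  | BT.leaf => [0]
  | BT.node l r =>
    (match BT.degVec l with
      | [] => []
      | a :: t => (a + 1) :: t) ++ BT.degVec r

/-!
`degVec (node l r)` is `degVec l` with its first entry raised by one, followed by `degVec r`.
So in the degree vector of `node l r` the sum of the first `j` entries exceeds `j` for
`1 ≤ j ≤ size l` and equals `j` at `j = size l + 1`: the left subtree is recovered from the first
position where the prefix sums come back down to the diagonal, and the vector splits there into
two shorter degree vectors. Recursing on both parts inverts `degVec`.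
-/

namespace BT

def IsDegVec (n : ℕ) (d : List ℕ) : Prop :=
  d.length = n + 1 ∧ d.sum = n ∧ ∀ i < n, i < (d.take (i + 1)).sum

theorem isDegVec_zero_iff {d : List ℕ} : IsDegVec 0 d ↔ d = [0] := by
  constructor
  · rintro ⟨hlen, hsum, -⟩
    obtain ⟨x, rfl⟩ := List.length_eq_one_iff.mp hlen
    simpa using hsum
  · rintro rfl
    simp [IsDegVec]

theorem degVec_node {l : BT} (r : BT) {a : ℕ} {t : List ℕ} (h : l.degVec = a :: t) :
    (node l r).degVec = (a + 1) :: t ++ r.degVec := by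
  simp [degVec, h]

theorem sum_take_succ_bump_append {a j : ℕ} {t : List ℕ} (b : List ℕ) (hj : j ≤ t.length) :
    (((a + 1) :: t ++ b).take (j + 1)).sum = ((a :: t).take (j + 1)).sum + 1 := by
  simp only [List.cons_append, List.take_succ_cons, List.take_append_of_le_length hj, List.sum_cons]
  omega

theorem IsDegVec.bump_append {m k a : ℕ} {t b : List ℕ} (ha : IsDegVec m (a :: t))
    (hb : IsDegVec k b) : IsDegVec (m + k + 1) ((a + 1) :: t ++ b) := by
  obtain ⟨hlen_a, hsum_a, hpre_a⟩ := ha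
  obtain ⟨hlen_b, hsum_b, hpre_b⟩ := hb
  simp only [List.length_cons, add_left_inj] at hlen_a
  simp only [List.sum_cons] at hsum_a
  refine ⟨?_, ?_, fun i hi => ?_⟩
  · simp only [List.cons_append, List.length_cons, List.length_append]
    omega
  · simp only [List.cons_append, List.sum_cons, List.sum_append]
    omega
  rcases lt_or_ge i m with him | hmi
  · rw [sum_take_succ_bump_append b (by omega)]
    have := hpre_a i him
    omega
  · obtain ⟨i, rfl⟩ := Nat.exists_eq_add_of_le hmi
    have htake : ((a + 1) :: t ++ b).take (m + i + 1) = (a + 1) :: t ++ b.take i := by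
      simp [List.take_append, hlen_a]
    rw [htake]
    rcases i with _ | i
    · simp only [List.take_zero, List.append_nil, List.sum_cons]
      omega
    · have := hpre_b i (by omega)
      simp only [List.cons_append, List.sum_cons, List.sum_append]
      omega

theorem IsDegVec.le_of_bump_append_eq {m m' a a' : ℕ} {t t' b b' : List ℕ}
    (h : IsDegVec m (a :: t)) (h' : IsDegVec m' (a' :: t'))
    (heq : (a + 1) :: t ++ b = (a' + 1) :: t' ++ b') : m ≤ m' := by
  obtain ⟨hlen, -, hpre⟩ := h
  obtain ⟨hlen', hsum', -⟩ := h'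
  simp only [List.length_cons, add_left_inj] at hlen hlen'
  by_contra! hlt
  have hleft := sum_take_succ_bump_append (a := a) (t := t) b (j := m') (by omega)
  have hright := sum_take_succ_bump_append (a := a') b' (j := m') hlen'.ge
  rw [List.take_of_length_le (l := a' :: t') (by simp [hlen']), hsum'] at hright
  have := hpre m' hlt
  rw [heq] at hleft
  omega

theorem IsDegVec.bump_append_inj {m m' a a' : ℕ} {t t' b b' : List ℕ}
    (h : IsDegVec m (a :: t)) (h' : IsDegVec m' (a' :: t'))
    (heq : (a + 1) :: t ++ b = (a' + 1) :: t' ++ b') : a :: t = a' :: t' ∧ b = b' := by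
  have hm : m = m' := (h.le_of_bump_append_eq h' heq).antisymm (h'.le_of_bump_append_eq h heq.symm)
  have hlen : t.length = t'.length := by
    have := h.1
    have := h'.1
    simp only [List.length_cons] at *
    omega
  obtain ⟨hhead, htail⟩ := List.append_inj heq (by simp [hlen])
  simp only [List.cons.injEq, add_left_inj] at hhead
  exact ⟨by rw [hhead.1, hhead.2], htail⟩

theorem IsDegVec.exists_bump_append {n : ℕ} {d : List ℕ} (hd : IsDegVec n d) (hn : n ≠ 0) :
    ∃ m k a t b, n = m + k + 1 ∧ IsDegVec m (a :: t) ∧ IsDegVec k b ∧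
      d = (a + 1) :: t ++ b := by
  obtain ⟨hlen, hsum, hpre⟩ := hd
  obtain ⟨c, t, rfl⟩ := List.exists_cons_of_length_eq_add_one hlen
  simp only [List.length_cons, add_left_inj] at hlen
  simp only [List.sum_cons] at hsum
  simp only [List.take_succ_cons, List.sum_cons] at hpre
  have hc : 0 < c := by simpa using hpre 0 (by omega)
  have hex : ∃ q, c + (t.take q).sum ≤ q + 1 := ⟨n, by rw [List.take_of_length_le hlen.le]; omega⟩
  -- `q + 1` is the first return of the prefix sums to the diagonal
  obtain ⟨q, hq, hbelow⟩ : ∃ q, c + (t.take q).sum ≤ q + 1 ∧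
      ∀ i < q, i + 1 < c + (t.take i).sum :=
    ⟨Nat.find hex, Nat.find_spec hex, fun i hi => by simpa using Nat.find_min hex hi⟩
  have hqn : q < n := by
    by_contra! hnq
    have := hbelow (n - 1) (by omega)
    have := List.sum_take_add_sum_drop t (n - 1)
    omega
  have hsum_q : c + (t.take q).sum = q + 1 := le_antisymm hq (hpre q hqn)
  refine ⟨q, n - q - 1, c - 1, t.take q, t.drop q, by omega, ⟨?_, ?_, ?_⟩, ⟨?_, ?_, ?_⟩, ?_⟩
  · simp [hlen, hqn.le]
  · simp only [List.sum_cons]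
    omega
  · intro i hi
    have := hbelow i hi
    simp only [List.take_succ_cons, List.take_take, min_eq_left hi.le, List.sum_cons]
    omega
  · simp only [List.length_drop, hlen]
    omega
  · have := List.sum_take_add_sum_drop t q
    omega
  · intro i hi
    have := hpre (q + (i + 1)) (by omega)
    rw [List.take_add, List.sum_append] at this
    omega
  · rw [Nat.sub_add_cancel (by omega), List.cons_append, List.take_append_drop]

theorem isDegVec_degVec (T : BT) : IsDegVec T.size T.degVec := by
  induction T with
  | leaf => exact isDegVec_zero_iff.mpr rfl
  | node l r ihl ihr =>
    obtain ⟨a, t, hl⟩ := List.exists_cons_of_length_eq_add_one ihl.1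
    rw [degVec_node r hl]
    exact (hl ▸ ihl).bump_append ihr

theorem exists_degVec_eq_cons (T : BT) : ∃ a t, T.degVec = a :: t :=
  List.exists_cons_of_length_eq_add_one (isDegVec_degVec T).1

theorem degVec_injective : Function.Injective degVec := by
  intro T
  induction T with
  | leaf =>
    rintro (_ | ⟨l', r'⟩) h
    · rfl
    · absurd congrArg List.length h
      simp [(isDegVec_degVec _).1, size]
  | node l r ihl ihr =>
    rintro (_ | ⟨l', r'⟩) h
    · absurd congrArg List.length h
      simp [(isDegVec_degVec _).1, size]
    · obtain ⟨a, t, hl⟩ := exists_degVec_eq_cons l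
      obtain ⟨a', t', hl'⟩ := exists_degVec_eq_cons l'
      rw [degVec_node r hl, degVec_node r' hl'] at h
      obtain ⟨hleft, hright⟩ :=
        (hl ▸ isDegVec_degVec l).bump_append_inj (hl' ▸ isDegVec_degVec l') h
      rw [ihl (hl.trans (hleft.trans hl'.symm)), ihr hright]

theorem exists_degVec_eq_of_isDegVec {n : ℕ} {d : List ℕ} (hd : IsDegVec n d) :
    ∃ T : BT, T.size = n ∧ T.degVec = d := by
  induction n using Nat.strong_induction_on generalizing d with
  | _ n ih =>
  rcases eq_or_ne n 0 with rfl | hn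
  · exact ⟨leaf, rfl, (isDegVec_zero_iff.mp hd).symm⟩
  · obtain ⟨m, k, a, t, b, rfl, ha, hb, rfl⟩ := hd.exists_bump_append hn
    obtain ⟨l, rfl, hl⟩ := ih m (by omega) ha
    obtain ⟨r, rfl, hr⟩ := ih k (by omega) hb
    exact ⟨node l r, rfl, by rw [degVec_node r hl, hr]⟩

end BT

theorem degree_vector_bijection (n : ℕ) :
    Set.BijOn BT.degVec {T : BT | T.size = n}
      {d : List ℕ | d.length = n + 1 ∧ d.sum = n ∧ ∀ i < n, i < (d.take (i + 1)).sum} :=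
  ⟨fun T hT => hT ▸ BT.isDegVec_degVec T, BT.degVec_injective.injOn,
    fun _ hd => BT.exists_degVec_eq_of_isDegVec hd⟩
end

section
/- For n ≥ 1, the number of Kreweras intervals of size n equals (1/(2n+1)) · C(3n, n), i.e., the number of intervals in the lattice of non-crossing partitions of [n] ordered by refinement equals (1/(2n+1)) · C(3n, n). -/
/-- A partition of Fin n (as a setoid) is non-crossing if there are no a < b < c < d with
a, c in one block and b, d in a different block. -/
def Noncrossing {n : ℕ} (π : Setoid (Fin n)) : Prop :=
  ∀ a b c d : Fin n, a < b → b < c → c < d → π a c → π b d → π a b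

/-!
Let `π ≤ π'` be noncrossing partitions of `{0, …, n}`, let `j` be the least element of the block
of `π'` containing `n` and `k ≥ j` the least element of the block of `π` containing `n`.
Noncrossingness forces every other block of `π` or `π'` to lie inside one of the segments
`[0, j)`, `[j, k)`, `[k, n)`. The block of `n` in `π` is `{n}` together with the `π`-block of `k`
in `[k, n)`, and in `π'` it is `{n}` together with the `π'`-blocks of `j` in `[j, k)` and of `k`
in `[k, n)`. So the interval is the same thing as a triple of arbitrary intervals on segments of
sizes `j`, `k - j`, `n - k`, and the number `I n` of intervals satisfies
`I (n + 1) = ∑_{a + b + c = n} I a * I b * I c`. The generating function is therefore the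
solution of `T = 1 + x T³`, whose `n`-th coefficient is `C(3n, n) / (2n + 1)`.
-/

open Finset Fin

/-- `raney n r = r / (3n + r) * C(3n + r, n)` is the coefficient of `xⁿ` in `T ^ r`, where
`T = 1 + x T³`; the recursion is `T ^ (r + 1) = T ^ r + x T ^ (r + 3)`. -/
def raney : ℕ → ℕ → ℕ
  | 0, _ => 1
  | _ + 1, 0 => 0
  | n + 1, r + 1 => raney (n + 1) r + raney n (r + 3)

@[simp] lemma raney_zero_left (r : ℕ) : raney 0 r = 1 := by cases r <;> simp [raney]

@[simp] lemma raney_succ_zero (n : ℕ) : raney (n + 1) 0 = 0 := by simp [raney]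

lemma raney_succ_succ (n r : ℕ) : raney (n + 1) (r + 1) = raney (n + 1) r + raney n (r + 3) := by
  rw [raney]

theorem raney_add (n p r : ℕ) :
    raney n (p + r) = ∑ x ∈ antidiagonal n, raney x.1 p * raney x.2 r := by
  induction n generalizing p with
  | zero => simp
  | succ m ih =>
    induction p with
    | zero => simp [Nat.sum_antidiagonal_succ]
    | succ p ihp =>
      rw [Nat.sum_antidiagonal_succ, add_right_comm, raney_succ_succ, ihp, add_right_comm,
        ih (p + 3), Nat.sum_antidiagonal_succ]
      simp only [raney_zero_left, raney_succ_succ, add_mul, sum_add_distrib]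
      ring

theorem mul_raney (n r : ℕ) : (3 * n + r) * raney n r = r * (3 * n + r).choose n := by
  induction n generalizing r with
  | zero => simp
  | succ n ih =>
    induction r with
    | zero => simp
    | succ r ihr =>
      have e₁ : (3 * n + r + 3) * raney (n + 1) r = r * (3 * n + r + 3).choose (n + 1) := by
        rw [show 3 * n + r + 3 = 3 * (n + 1) + r by ring]; exact ihr
      have e₂ : (3 * n + r + 3) * raney n (r + 3) = (r + 3) * (3 * n + r + 3).choose n := by
        rw [show 3 * n + r + 3 = 3 * n + (r + 3) by ring]; exact ih (r + 3)
      have e₃ : (3 * n + r + 3).choose (n + 1) * (n + 1) =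
          (3 * n + r + 3).choose n * (2 * n + r + 3) := by
        rw [Nat.choose_succ_right_eq]; congr 2; omega
      rw [show 3 * (n + 1) + (r + 1) = 3 * n + r + 3 + 1 by ring, Nat.choose_succ_succ,
        raney_succ_succ]
      apply Nat.eq_of_mul_eq_mul_left (show 0 < (3 * n + r + 3) * (n + 1) by positivity)
      zify at e₁ e₂ e₃ ⊢
      linear_combination ((3 * (n : ℤ) + r + 4) * (n + 1)) * (e₁ + e₂) - (3 * (n : ℤ) + 3) * e₃

theorem two_mul_add_one_mul_raney_one (n : ℕ) : (2 * n + 1) * raney n 1 = (3 * n).choose n := by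
  have h := mul_raney n 1
  have h' := Nat.choose_mul_succ_eq (3 * n) n
  rw [show 3 * n + 1 - n = 2 * n + 1 by omega] at h'
  apply Nat.eq_of_mul_eq_mul_left (show 0 < 3 * n + 1 by omega)
  rw [mul_left_comm, h, one_mul, mul_comm, ← h', mul_comm]

theorem ncard_eq_sum_ncard_fiber {α : Type*} [Finite α] {s : Set α} {f : α → ℕ} {n : ℕ}
    (hf : ∀ x ∈ s, f x ≤ n) : s.ncard = ∑ k ∈ range (n + 1), {x ∈ s | f x = k}.ncard := by
  classical
  have := Fintype.ofFinite α
  rw [Set.ncard_eq_toFinset_card', card_eq_sum_card_fiberwise (f := f) (t := range (n + 1))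
    fun x hx => by simpa [Nat.lt_succ_iff] using hf x (by simpa using hx)]
  refine sum_congr rfl fun k _ => ?_
  rw [Set.ncard_eq_toFinset_card']
  congr 1
  ext x
  simp

instance Setoid.finite {α : Type*} [Finite α] : Finite (Setoid α) :=
  .of_injective (fun s : Setoid α => (s : α → α → Prop)) fun _ _ h =>
    Setoid.ext fun x y => Iff.of_eq (congrFun₂ h x y)

lemma Fin.castAdd_lt_natAdd {m n : ℕ} (i : Fin m) (j : Fin n) : castAdd n i < natAdd m j := by
  simp only [Fin.lt_def, Fin.val_castAdd, Fin.val_natAdd]; omega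

lemma Fin.not_natAdd_lt_castAdd {m n : ℕ} (i : Fin m) (j : Fin n) : ¬ natAdd m j < castAdd n i :=
  (castAdd_lt_natAdd i j).not_gt

lemma Fin.castAdd_zero_eq_zero {a b : ℕ} (ha : 0 < a) :
    (castAdd (b + 1) ⟨0, ha⟩ : Fin (a + b + 1)) = 0 :=
  Fin.ext (by simp)

section Noncrossing

theorem Noncrossing.comap {m n : ℕ} {π : Setoid (Fin n)} (hπ : Noncrossing π) {f : Fin m → Fin n}
    (hf : StrictMono f) : Noncrossing (π.comap f) :=
  fun _ _ _ _ h₁ h₂ h₃ => hπ _ _ _ _ (hf h₁) (hf h₂) (hf h₃)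

theorem Noncrossing.rel_last {n : ℕ} {π : Setoid (Fin (n + 1))} (hπ : Noncrossing π)
    {x y z : Fin (n + 1)} (hxy : x < y) (hyz : y ≤ z) (hxz : π x z) (hy : π y (last n)) :
    π x (last n) := by
  obtain rfl | hyz := hyz.eq_or_lt
  · exact π.trans hxz hy
  obtain rfl | hz := (le_last z).eq_or_lt
  · exact hxz
  exact π.trans (hπ x y z (last n) hxy hyz hz hxz hy) hy

theorem Noncrossing.rel_zero {m : ℕ} {π : Setoid (Fin m)} (hπ : Noncrossing π)
    {x y z : Fin m} (hxy : x ≤ y) (hyz : y < z) (hxz : π x z) (hy : π y ⟨0, y.pos⟩) :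
    π z ⟨0, y.pos⟩ := by
  obtain rfl | hxy := hxy.eq_or_lt
  · exact π.trans (π.symm hxz) hy
  obtain h0 | h0 := (show (⟨0, y.pos⟩ : Fin m) ≤ x from Nat.zero_le _).eq_or_lt
  · exact h0 ▸ π.symm hxz
  exact π.trans (π.symm hxz) (π.symm (hπ _ x y z h0 hxy hyz (π.symm hy) hxz))

def ncIntervals (n : ℕ) : Set (Setoid (Fin n) × Setoid (Fin n)) :=
  {q | Noncrossing q.1 ∧ Noncrossing q.2 ∧ q.1 ≤ q.2}

lemma comap_mem_ncIntervals {m n : ℕ} {q : Setoid (Fin n) × Setoid (Fin n)}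
    (hq : q ∈ ncIntervals n) {f : Fin m → Fin n} (hf : StrictMono f) :
    (q.1.comap f, q.2.comap f) ∈ ncIntervals m :=
  ⟨hq.1.comap hf, hq.2.1.comap hf, fun _ _ h => hq.2.2 h⟩

theorem ncard_ncIntervals_of_le_one {m : ℕ} (hm : m ≤ 1) : (ncIntervals m).ncard = 1 := by
  have : Subsingleton (Fin m) := Fin.subsingleton_iff_le_one.2 hm
  have : Subsingleton (Setoid (Fin m)) :=
    ⟨fun σ τ => Setoid.ext fun x y => by simp [Subsingleton.elim x y]⟩
  rw [Set.ncard_eq_one]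
  refine ⟨(⊥, ⊥), Set.eq_singleton_iff_unique_mem.2
    ⟨⟨?_, ?_, le_rfl⟩, fun q _ => Subsingleton.elim _ _⟩⟩ <;>
    exact fun x y _ _ hxy => absurd (Subsingleton.elim x y) hxy.ne

open Classical in
noncomputable def blockMin {m : ℕ} (π : Setoid (Fin m)) (x : Fin m) : Fin m :=
  (univ.filter (π x)).min' ⟨x, by simp⟩

lemma blockMin_eq_iff {m : ℕ} {π : Setoid (Fin m)} {x y : Fin m} :
    blockMin π x = y ↔ π x y ∧ ∀ z, π x z → y ≤ z := by
  unfold blockMin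
  exact (min'_eq_iff _ _ _).trans (by simp)

end Noncrossing

section Glue

variable {a b : ℕ} {t : Prop} {σ : Setoid (Fin a)} {τ : Setoid (Fin (b + 1))}

open Classical in
noncomputable def glueLabel (t : Prop) (σ : Setoid (Fin a)) (τ : Setoid (Fin (b + 1))) :
    Fin (a + (b + 1)) → Quotient σ ⊕ Quotient τ :=
  addCases (fun i => if t ∧ σ i ⟨0, i.pos⟩ then .inr ⟦last b⟧ else .inl ⟦i⟧) (fun j => .inr ⟦j⟧)

/-- `σ` on `[0, a)` and `τ` on `[a, a + b]` side by side; for `t`, the block of `0` in `σ` is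
merged with the block of the last point. -/
noncomputable def glue (t : Prop) (σ : Setoid (Fin a)) (τ : Setoid (Fin (b + 1))) :
    Setoid (Fin (a + (b + 1))) :=
  Setoid.ker (glueLabel t σ τ)

open Classical in
lemma glueLabel_castAdd (i : Fin a) : glueLabel t σ τ (castAdd _ i) =
    if t ∧ σ i ⟨0, i.pos⟩ then .inr ⟦last b⟧ else .inl ⟦i⟧ := by
  rw [glueLabel, addCases_left]

lemma glueLabel_natAdd (j : Fin (b + 1)) : glueLabel t σ τ (natAdd a j) = .inr ⟦j⟧ := by
  rw [glueLabel, addCases_right]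

@[simp] lemma glue_castAdd_castAdd (i i' : Fin a) :
    glue t σ τ (castAdd _ i) (castAdd _ i') ↔ σ i i' := by
  rw [glue, Setoid.ker_def, glueLabel_castAdd, glueLabel_castAdd]
  split_ifs with h h' h'
  · simpa [Quotient.eq] using σ.trans h.2 (σ.symm h'.2)
  · simpa using fun hii' => h' ⟨h.1, σ.trans (σ.symm hii') h.2⟩
  · simpa using fun hii' => h ⟨h'.1, σ.trans hii' h'.2⟩
  · simp [Quotient.eq]

@[simp] lemma glue_natAdd_natAdd (j j' : Fin (b + 1)) :
    glue t σ τ (natAdd a j) (natAdd a j') ↔ τ j j' := by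
  rw [glue, Setoid.ker_def, glueLabel_natAdd, glueLabel_natAdd, Sum.inr.injEq, Quotient.eq]

@[simp] lemma glue_castAdd_natAdd (i : Fin a) (j : Fin (b + 1)) :
    glue t σ τ (castAdd _ i) (natAdd a j) ↔ t ∧ σ i ⟨0, i.pos⟩ ∧ τ j (last b) := by
  rw [glue, Setoid.ker_def, glueLabel_castAdd, glueLabel_natAdd]
  split_ifs with h
  · simp [Quotient.eq, h, τ.comm]
  · simpa using fun ht hσ _ => h ⟨ht, hσ⟩

@[simp] lemma glue_natAdd_castAdd (i : Fin a) (j : Fin (b + 1)) :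
    glue t σ τ (natAdd a j) (castAdd _ i) ↔ t ∧ σ i ⟨0, i.pos⟩ ∧ τ j (last b) := by
  rw [Setoid.comm', glue_castAdd_natAdd]

@[simp] lemma comap_castAdd_glue : (glue t σ τ).comap (castAdd _) = σ :=
  Setoid.ext fun _ _ => glue_castAdd_castAdd _ _

@[simp] lemma comap_natAdd_glue : (glue t σ τ).comap (natAdd a) = τ :=
  Setoid.ext fun _ _ => glue_natAdd_natAdd _ _

theorem Noncrossing.glue (hσ : Noncrossing σ) (hτ : Noncrossing τ) :
    Noncrossing (glue t σ τ) := by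
  intro w x y z
  induction w using Fin.addCases <;> induction x using Fin.addCases <;>
    induction y using Fin.addCases <;> induction z using Fin.addCases <;>
    simp only [(strictMono_castAdd _).lt_iff_lt, natAdd_lt_natAdd_iff, castAdd_lt_natAdd,
      not_natAdd_lt_castAdd, glue_castAdd_castAdd, glue_natAdd_natAdd, glue_castAdd_natAdd,
      glue_natAdd_castAdd, false_imp_iff, forall_const, implies_true]
  case left.left.left.left w x y z => exact hσ w x y z
  case left.left.left.right w x y z =>
    rintro hwx hxy hwy ⟨-, hx, -⟩
    exact σ.trans hwy (σ.trans (hσ.rel_zero hwx.le hxy hwy hx) (σ.symm hx))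
  case left.left.right.right w x y z =>
    rintro - - ⟨-, hw, -⟩ ⟨-, hx, -⟩
    exact σ.trans hw (σ.symm hx)
  case left.right.right.right w x y z =>
    rintro hxy hyz ⟨ht, hw, hy⟩ hxz
    exact ⟨ht, hw, hτ.rel_last hxy hyz.le hxz hy⟩
  case right.right.right.right w x y z => exact hτ w x y z

lemma glue_mono {t' : Prop} {σ' : Setoid (Fin a)} {τ' : Setoid (Fin (b + 1))} (ht : t → t')
    (hσ : σ ≤ σ') (hτ : τ ≤ τ') : glue t σ τ ≤ glue t' σ' τ' := by
  intro x y
  induction x using Fin.addCases <;> induction y using Fin.addCases <;>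
    simp only [glue_castAdd_castAdd, glue_natAdd_natAdd, glue_castAdd_natAdd, glue_natAdd_castAdd]
  · exact fun h => hσ h
  · exact fun ⟨h₁, h₂, h₃⟩ => ⟨ht h₁, hσ h₂, hτ h₃⟩
  · exact fun ⟨h₁, h₂, h₃⟩ => ⟨ht h₁, hσ h₂, hτ h₃⟩
  · exact fun h => hτ h

/-- The relations of `π` between `[0, a)` and `[a, a + b]` are exactly those of `glue t`. -/
def CrossLinked (t : Prop) (π : Setoid (Fin (a + (b + 1)))) : Prop :=
  ∀ i j, π (castAdd _ i) (natAdd a j) ↔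
    t ∧ π (castAdd _ i) (castAdd _ ⟨0, i.pos⟩) ∧ π (natAdd a j) (natAdd a (last b))

lemma crossLinked_glue : CrossLinked t (glue t σ τ) := by
  intro i j
  simp only [glue_castAdd_castAdd, glue_natAdd_natAdd, glue_castAdd_natAdd]

lemma CrossLinked.glue_comap {π : Setoid (Fin (a + (b + 1)))} (h : CrossLinked t π) :
    glue t (π.comap (castAdd _)) (π.comap (natAdd a)) = π := by
  ext x y
  induction x using Fin.addCases <;> induction y using Fin.addCases <;>
    simp only [glue_castAdd_castAdd, glue_natAdd_natAdd, glue_castAdd_natAdd, glue_natAdd_castAdd,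
      Setoid.comap_rel, h _ _]
  exact (π.comm'.trans (h _ _)).symm

lemma crossLinked_false_iff {π : Setoid (Fin (a + (b + 1)))} :
    CrossLinked False π ↔ ∀ i j, ¬ π (castAdd _ i) (natAdd a j) := by
  simp [CrossLinked]

lemma CrossLinked.false_of_le {π π' : Setoid (Fin (a + (b + 1)))} (h : CrossLinked False π')
    (hle : π ≤ π') : CrossLinked False π := by
  rw [crossLinked_false_iff] at h ⊢
  exact fun i j hij => h i j (hle hij)

theorem crossLinked_true_iff_rel_zero_last {π : Setoid (Fin (a + (0 + 1)))} :
    CrossLinked True π ↔ π 0 (last a) := by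
  have hlast (j : Fin (0 + 1)) : (natAdd a j : Fin (a + 1)) = last a :=
    Fin.ext (by simp [Fin.fin_one_eq_zero j])
  simp only [CrossLinked, hlast, true_and, π.refl', and_true, forall_const]
  constructor
  · intro h
    rcases Nat.eq_zero_or_pos a with rfl | ha
    · exact π.refl' _
    · simpa [castAdd_zero_eq_zero ha] using (h ⟨0, ha⟩).2 (π.refl' _)
  · intro h0 i
    rw [castAdd_zero_eq_zero i.pos]
    exact ⟨fun h => π.trans h (π.symm h0), fun h => π.trans h h0⟩

theorem blockMin_last_eq_iff {π : Setoid (Fin (a + (b + 1)))} (hπ : Noncrossing π) :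
    (blockMin π (last (a + b))).val = a ↔
      π (natAdd a 0) (last (a + b)) ∧ CrossLinked False π := by
  have hval : (blockMin π (last (a + b))).val = a ↔ blockMin π (last (a + b)) = natAdd a 0 := by
    simp [Fin.ext_iff]
  have hmin : (∀ z, π (last (a + b)) z → natAdd a 0 ≤ z) ↔
      ∀ i, ¬ π (castAdd _ i) (last (a + b)) := by
    refine ⟨fun h i hi => (castAdd_lt_natAdd i 0).not_ge (h _ (π.symm hi)), fun h z hz => ?_⟩
    induction z using Fin.addCases with
    | left i => exact absurd (π.symm hz) (h i)
    | right j => exact (natAdd_le_natAdd_iff a).2 (Fin.zero_le j)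
  rw [hval, blockMin_eq_iff, hmin, crossLinked_false_iff]
  constructor
  · rintro ⟨h0, h⟩
    refine ⟨π.symm h0, fun i j hij => h i ?_⟩
    exact hπ.rel_last (castAdd_lt_natAdd i 0) ((natAdd_le_natAdd_iff a).2 (Fin.zero_le j)) hij
      (π.symm h0)
  · rintro ⟨h0, h⟩
    exact ⟨π.symm h0, fun i => by simpa using h i (last b)⟩

end Glue

section Split

variable {a b : ℕ}

def splitPair (q : Setoid (Fin (a + (b + 1))) × Setoid (Fin (a + (b + 1)))) :
    (Setoid (Fin a) × Setoid (Fin a)) × (Setoid (Fin (b + 1)) × Setoid (Fin (b + 1))) :=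
  ((q.1.comap (castAdd _), q.2.comap (castAdd _)), (q.1.comap (natAdd a), q.2.comap (natAdd a)))

theorem bijOn_splitPair {t₁ t₂ : Prop} (ht : t₁ → t₂)
    (T : Set (Setoid (Fin (b + 1)) × Setoid (Fin (b + 1)))) :
    Set.BijOn splitPair
      {q ∈ ncIntervals (a + (b + 1)) |
        CrossLinked t₁ q.1 ∧ CrossLinked t₂ q.2 ∧ (splitPair q).2 ∈ T}
      (ncIntervals a ×ˢ (ncIntervals (b + 1) ∩ T)) := by
  let gluePair (p : (Setoid (Fin a) × Setoid (Fin a)) ×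
      (Setoid (Fin (b + 1)) × Setoid (Fin (b + 1)))) :
      Setoid (Fin (a + (b + 1))) × Setoid (Fin (a + (b + 1))) :=
    (glue t₁ p.1.1 p.2.1, glue t₂ p.1.2 p.2.2)
  have split_glue (p) : splitPair (gluePair p) = p := by simp [splitPair, gluePair]
  refine Set.InvOn.bijOn (f' := gluePair) ⟨?_, fun p _ => split_glue p⟩ ?_ ?_
  · rintro q ⟨-, h₁, h₂, -⟩
    exact Prod.ext h₁.glue_comap h₂.glue_comap
  · rintro q ⟨hq, -, -, hT⟩
    exact ⟨comap_mem_ncIntervals hq (strictMono_castAdd _),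
      comap_mem_ncIntervals hq (strictMono_natAdd _), hT⟩
  · rintro p ⟨⟨hα, hα', hαα'⟩, ⟨hβ, hβ', hββ'⟩, hT⟩
    exact ⟨⟨hα.glue hβ, hα'.glue hβ', glue_mono ht hαα' hββ'⟩, crossLinked_glue,
      crossLinked_glue, (split_glue p).symm ▸ hT⟩

theorem ncard_crossLinked {t₁ t₂ : Prop} (ht : t₁ → t₂)
    (T : Set (Setoid (Fin (b + 1)) × Setoid (Fin (b + 1)))) :
    {q ∈ ncIntervals (a + (b + 1)) |
        CrossLinked t₁ q.1 ∧ CrossLinked t₂ q.2 ∧ (splitPair q).2 ∈ T}.ncard =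
      (ncIntervals a).ncard * (ncIntervals (b + 1) ∩ T).ncard := by
  rw [(bijOn_splitPair ht T).ncard_eq, Set.ncard_prod]

end Split

section Fibers

theorem ncIntervals_blockMin_upper_eq (a b : ℕ) :
    {q ∈ ncIntervals (a + b + 1) | (blockMin q.2 (last (a + b))).val = a} =
      {q ∈ ncIntervals (a + (b + 1)) | CrossLinked False q.1 ∧ CrossLinked False q.2 ∧
        (splitPair q).2 ∈ {r | r.2 0 (last b)}} := by
  ext q
  refine and_congr_right fun hq => ?_
  rw [blockMin_last_eq_iff (a := a) (b := b) hq.2.1]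
  exact ⟨fun ⟨h0, h⟩ => ⟨h.false_of_le hq.2.2, h, h0⟩, fun ⟨_, h, h0⟩ => ⟨h0, h⟩⟩

theorem ncIntervals_upper_linked_blockMin_lower_eq (a b : ℕ) :
    {q ∈ ncIntervals (a + b + 1) |
        q.2 0 (last (a + b)) ∧ (blockMin q.1 (last (a + b))).val = a} =
      {q ∈ ncIntervals (a + (b + 1)) | CrossLinked False q.1 ∧ CrossLinked True q.2 ∧
        (splitPair q).2 ∈ {r | r.1 0 (last b)}} := by
  ext q
  refine and_congr_right fun hq => ?_
  rw [blockMin_last_eq_iff (a := a) (b := b) hq.1]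
  constructor
  · rintro ⟨h0, hR, hF⟩
    have hR' := hq.2.2 hR
    refine ⟨hF, fun i j => ⟨fun hij => ?_, fun ⟨_, hi, hj⟩ => ?_⟩, hR⟩
    · have hi := hq.2.1.rel_last (castAdd_lt_natAdd i 0)
        ((natAdd_le_natAdd_iff a).2 (Fin.zero_le j)) hij hR'
      rw [castAdd_zero_eq_zero i.pos]
      exact ⟨trivial, q.2.trans hi (q.2.symm h0), q.2.trans (q.2.symm hij) hi⟩
    · rw [castAdd_zero_eq_zero i.pos] at hi
      exact q.2.trans hi (q.2.trans h0 (q.2.symm hj))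
  · rintro ⟨hF, hT, hR⟩
    refine ⟨?_, hR, hF⟩
    rcases Nat.eq_zero_or_pos a with rfl | ha
    · simpa [Fin.ext_iff] using hq.2.2 hR
    · have h := (hT ⟨0, ha⟩ 0).2 ⟨trivial, q.2.refl' _, hq.2.2 hR⟩
      rw [castAdd_zero_eq_zero ha] at h
      exact q.2.trans h (hq.2.2 hR)

theorem ncIntervals_lower_linked_eq (b : ℕ) :
    {q ∈ ncIntervals (b + 1) | q.1 0 (last b)} =
      {q ∈ ncIntervals (b + (0 + 1)) | CrossLinked True q.1 ∧ CrossLinked True q.2 ∧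
        (splitPair q).2 ∈ Set.univ} := by
  ext q
  refine and_congr_right fun hq => ?_
  simp only [crossLinked_true_iff_rel_zero_last, Set.mem_univ, and_true]
  exact ⟨fun h => ⟨h, hq.2.2 h⟩, And.left⟩

end Fibers

theorem ncard_ncIntervals_succ (n : ℕ) :
    (ncIntervals (n + 1)).ncard = ∑ x ∈ antidiagonal n,
      (ncIntervals x.1).ncard * {q ∈ ncIntervals (x.2 + 1) | q.2 0 (last x.2)}.ncard := by
  rw [ncard_eq_sum_ncard_fiber (f := fun q => (blockMin q.2 (last n)).val) (n := n)
    fun q _ => Nat.lt_succ_iff.1 (blockMin _ _).isLt, Nat.sum_antidiagonal_eq_sum_range_succ_mk]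
  refine sum_congr rfl fun a ha => ?_
  obtain ⟨b, rfl⟩ : ∃ b, n = a + b := ⟨n - a, by simp at ha; omega⟩
  rw [Nat.add_sub_cancel_left, ncIntervals_blockMin_upper_eq, ncard_crossLinked id]
  rfl

theorem ncard_ncIntervals_upper_linked (n : ℕ) :
    {q ∈ ncIntervals (n + 1) | q.2 0 (last n)}.ncard = ∑ x ∈ antidiagonal n,
      (ncIntervals x.1).ncard * {q ∈ ncIntervals (x.2 + 1) | q.1 0 (last x.2)}.ncard := by
  rw [ncard_eq_sum_ncard_fiber (f := fun q => (blockMin q.1 (last n)).val) (n := n)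
    fun q _ => Nat.lt_succ_iff.1 (blockMin _ _).isLt, Nat.sum_antidiagonal_eq_sum_range_succ_mk]
  refine sum_congr rfl fun a ha => ?_
  obtain ⟨b, rfl⟩ : ∃ b, n = a + b := ⟨n - a, by simp at ha; omega⟩
  simp only [Set.mem_ofPred_eq, and_assoc]
  rw [Nat.add_sub_cancel_left, ncIntervals_upper_linked_blockMin_lower_eq,
    ncard_crossLinked False.elim]
  rfl

theorem ncard_ncIntervals_lower_linked (b : ℕ) :
    {q ∈ ncIntervals (b + 1) | q.1 0 (last b)}.ncard = (ncIntervals b).ncard := by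
  rw [ncIntervals_lower_linked_eq, ncard_crossLinked id, Set.inter_univ,
    ncard_ncIntervals_of_le_one le_rfl, mul_one]

theorem ncard_ncIntervals (n : ℕ) : (ncIntervals n).ncard = raney n 1 := by
  induction n using Nat.strong_induction_on with
  | _ n ih =>
  cases n with
  | zero => rw [ncard_ncIntervals_of_le_one zero_le_one, raney_zero_left]
  | succ n =>
    have h_upper (m) (hm : m < n + 1) :
        {q ∈ ncIntervals (m + 1) | q.2 0 (last m)}.ncard = raney m 2 := by
      rw [ncard_ncIntervals_upper_linked, raney_add m 1 1]
      refine sum_congr rfl fun x hx => ?_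
      rw [ih x.1 ((HasAntidiagonal.antidiagonal.fst_le hx).trans_lt hm),
        ncard_ncIntervals_lower_linked,
        ih x.2 ((HasAntidiagonal.antidiagonal.snd_le hx).trans_lt hm)]
    rw [ncard_ncIntervals_succ, raney_succ_succ, raney_succ_zero, zero_add, raney_add n 1 2]
    refine sum_congr rfl fun x hx => ?_
    rw [ih x.1 (Nat.antidiagonal.fst_lt hx), h_upper x.2 (Nat.antidiagonal.snd_lt hx)]

theorem count_kreweras_intervals_general (n : ℕ) :
    (2 * n + 1) *
        Set.ncard {q : Setoid (Fin n) × Setoid (Fin n) |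
          Noncrossing q.1 ∧ Noncrossing q.2 ∧ q.1 ≤ q.2} =
      Nat.choose (3 * n) n := by
  rw [← two_mul_add_one_mul_raney_one, ← ncard_ncIntervals]
  rfl

/-- The number of intervals in the Kreweras lattice of non-crossing partitions of [n]
(ordered by refinement) is (1/(2n+1))·C(3n,n). -/
theorem count_kreweras_intervals (n : ℕ) (hn : 1 ≤ n) :
    (2 * n + 1) *
        Set.ncard {q : Setoid (Fin n) × Setoid (Fin n) |
          Noncrossing q.1 ∧ Noncrossing q.2 ∧ q.1 ≤ q.2} =
      Nat.choose (3 * n) n :=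
  count_kreweras_intervals_general n
end
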